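/- Let a ∈ ℝ and let I be an interval with least element a, nonempty interior, and I ⊂ [a,∞). If 0 < α ≤ 1 and q : I → ℝ is essentially bounded on I, then I^α_{a+}[q] is α-Hölder continuous on all of I and vanishes at a: there exists C ≥ 0 such that |I^α_{a+}[q](t₂) − I^α_{a+}[q](t₁)| ≤ C·|t₂ − t₁|^α for all t₁, t₂ ∈ I, and I^α_{a+}[q](a) = 0. -/

import Mathlib

/-! Split `I^α[q](t₂) - I^α[q](t₁)` at `t₁`. On `[a, t₁]` the integrand is `q` times the kernel
increment `(t₁ - τ)^(α-1) - (t₂ - τ)^(α-1)`, which is nonnegative because `α ≤ 1`, and whose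
integral telescopes to at most `(t₂ - t₁)^α / α`; on `[t₁, t₂]` the kernel integrates to exactly
`(t₂ - t₁)^α / α`. With `|q| ≤ M` a.e. this gives the Hölder constant `2M / (α Γ(α))`. -/

open MeasureTheory Set

/-- Left Riemann–Liouville fractional integral of order `α` with base point `a`
(for `α = 0` it is the identity). -/
noncomputable def rlInt (a α : ℝ) (q : ℝ → ℝ) (t : ℝ) : ℝ :=
  if α = 0 then q t else (1 / Real.Gamma α) * ∫ τ in a..t, (t - τ) ^ (α - 1) * q τ

open intervalIntegral

section Kernel

variable {α : ℝ}

lemma intervalIntegrable_sub_rpow (hα : 0 < α) (t c d : ℝ) :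
    IntervalIntegrable (fun τ => (t - τ) ^ (α - 1)) volume c d := by
  simpa using (intervalIntegrable_rpow' (a := t - c) (b := t - d)
    (by linarith : (-1 : ℝ) < α - 1)).comp_sub_left t

lemma integral_sub_rpow (hα : 0 < α) (t c d : ℝ) :
    ∫ τ in c..d, (t - τ) ^ (α - 1) = ((t - c) ^ α - (t - d) ^ α) / α := by
  rw [integral_comp_sub_left (fun x => x ^ (α - 1)) t,
    integral_rpow (Or.inl (by linarith)), sub_add_cancel]

end Kernel

section BoundedWeight

variable {k q : ℝ → ℝ} {c d M : ℝ}

lemma IntervalIntegrable.mul_of_ae_abs_le (hcd : c ≤ d) (hk : IntervalIntegrable k volume c d)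
    (hqm : AEStronglyMeasurable q (volume.restrict (Ioc c d)))
    (hq : ∀ᵐ τ ∂volume.restrict (Ioc c d), |q τ| ≤ M) :
    IntervalIntegrable (fun τ => k τ * q τ) volume c d := by
  rw [intervalIntegrable_iff_integrableOn_Ioc_of_le hcd] at hk ⊢
  exact hk.mul_bdd hqm hq

lemma abs_integral_mul_le_of_nonneg (hcd : c ≤ d) (hk : IntervalIntegrable k volume c d)
    (hk0 : ∀ᵐ τ ∂volume.restrict (Ioc c d), 0 ≤ k τ)
    (hq : ∀ᵐ τ ∂volume.restrict (Ioc c d), |q τ| ≤ M) :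
    |∫ τ in c..d, k τ * q τ| ≤ M * ∫ τ in c..d, k τ := by
  rw [← Real.norm_eq_abs, ← intervalIntegral.integral_const_mul]
  refine norm_integral_le_of_norm_le hcd ?_ (hk.const_mul M)
  rw [← ae_restrict_iff' measurableSet_Ioc]
  filter_upwards [hk0, hq] with τ hkτ hqτ
  rw [norm_mul, Real.norm_eq_abs, abs_of_nonneg hkτ, mul_comm M]
  exact mul_le_mul_of_nonneg_left hqτ hkτ

end BoundedWeight

section Hoelder

variable {α M a t₁ t₂ : ℝ} {q : ℝ → ℝ}

lemma abs_integral_kernel_tail_le (hα : 0 < α) (h12 : t₁ ≤ t₂)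
    (hq : ∀ᵐ τ ∂volume.restrict (Ioc t₁ t₂), |q τ| ≤ M) :
    |∫ τ in t₁..t₂, (t₂ - τ) ^ (α - 1) * q τ| ≤ M / α * (t₂ - t₁) ^ α := by
  have hk0 : ∀ᵐ τ ∂volume.restrict (Ioc t₁ t₂), 0 ≤ (t₂ - τ) ^ (α - 1) := by
    filter_upwards [ae_restrict_mem measurableSet_Ioc] with τ hτ
    exact Real.rpow_nonneg (sub_nonneg.mpr hτ.2) _
  refine (abs_integral_mul_le_of_nonneg h12 (intervalIntegrable_sub_rpow hα _ _ _) hk0 hq).trans ?_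
  rw [integral_sub_rpow hα, sub_self, Real.zero_rpow hα.ne']
  exact le_of_eq (by ring)

lemma abs_integral_kernel_increment_le (hα0 : 0 < α) (hα1 : α ≤ 1) (hM : 0 ≤ M)
    (ha : a ≤ t₁) (h12 : t₁ ≤ t₂) (hq : ∀ᵐ τ ∂volume.restrict (Ioc a t₁), |q τ| ≤ M) :
    |∫ τ in a..t₁, ((t₁ - τ) ^ (α - 1) - (t₂ - τ) ^ (α - 1)) * q τ|
      ≤ M / α * (t₂ - t₁) ^ α := by
  -- `s ↦ s^(α-1)` is antitone on `(0, ∞)` as `α ≤ 1`; it fails only on the null set `{t₁}`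
  have hk0 : ∀ᵐ τ ∂volume.restrict (Ioc a t₁), 0 ≤ (t₁ - τ) ^ (α - 1) - (t₂ - τ) ^ (α - 1) := by
    filter_upwards [ae_restrict_mem measurableSet_Ioc,
      ae_restrict_of_ae (Measure.ae_ne volume t₁)] with τ hτ hτt₁
    have hpos : 0 < t₁ - τ := sub_pos.mpr (lt_of_le_of_ne hτ.2 hτt₁)
    exact sub_nonneg.mpr (Real.rpow_le_rpow_of_nonpos hpos (by linarith) (by linarith))
  have hk := (intervalIntegrable_sub_rpow hα0 t₁ a t₁).sub (intervalIntegrable_sub_rpow hα0 t₂ a t₁)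
  have hmono : (t₁ - a) ^ α ≤ (t₂ - a) ^ α :=
    Real.rpow_le_rpow (by linarith) (by linarith) hα0.le
  have hint : ∫ τ in a..t₁, ((t₁ - τ) ^ (α - 1) - (t₂ - τ) ^ (α - 1)) ≤ (t₂ - t₁) ^ α / α := by
    rw [integral_sub (intervalIntegrable_sub_rpow hα0 _ _ _)
      (intervalIntegrable_sub_rpow hα0 _ _ _), integral_sub_rpow hα0, integral_sub_rpow hα0,
      sub_self, Real.zero_rpow hα0.ne', ← sub_div, div_le_div_iff_of_pos_right hα0]
    linarith
  calc _ ≤ M * ∫ τ in a..t₁, ((t₁ - τ) ^ (α - 1) - (t₂ - τ) ^ (α - 1)) :=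
        abs_integral_mul_le_of_nonneg ha hk hk0 hq
    _ ≤ M * ((t₂ - t₁) ^ α / α) := mul_le_mul_of_nonneg_left hint hM
    _ = M / α * (t₂ - t₁) ^ α := by ring

lemma abs_integral_kernel_sub_le (hα0 : 0 < α) (hα1 : α ≤ 1) (hM : 0 ≤ M)
    (ha : a ≤ t₁) (h12 : t₁ ≤ t₂) (hqm : AEStronglyMeasurable q (volume.restrict (Ioc a t₂)))
    (hq : ∀ᵐ τ ∂volume.restrict (Ioc a t₂), |q τ| ≤ M) :
    |(∫ τ in a..t₂, (t₂ - τ) ^ (α - 1) * q τ) - ∫ τ in a..t₁, (t₁ - τ) ^ (α - 1) * q τ|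
      ≤ 2 * M / α * (t₂ - t₁) ^ α := by
  have hleft : Ioc a t₁ ⊆ Ioc a t₂ := Ioc_subset_Ioc_right h12
  have hright : Ioc t₁ t₂ ⊆ Ioc a t₂ := Ioc_subset_Ioc_left ha
  have hint : ∀ t, IntervalIntegrable (fun τ => (t - τ) ^ (α - 1) * q τ) volume a t₁ := fun t =>
    (intervalIntegrable_sub_rpow hα0 t a t₁).mul_of_ae_abs_le ha (hqm.mono_set hleft)
      (ae_restrict_of_ae_restrict_of_subset hleft hq)
  have hsplit : (∫ τ in a..t₂, (t₂ - τ) ^ (α - 1) * q τ) - ∫ τ in a..t₁, (t₁ - τ) ^ (α - 1) * q τ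
      = (∫ τ in t₁..t₂, (t₂ - τ) ^ (α - 1) * q τ)
        - ∫ τ in a..t₁, ((t₁ - τ) ^ (α - 1) - (t₂ - τ) ^ (α - 1)) * q τ := by
    simp only [sub_mul]
    rw [integral_sub (hint t₁) (hint t₂), ← integral_add_adjacent_intervals (hint t₂)
      ((intervalIntegrable_sub_rpow hα0 t₂ t₁ t₂).mul_of_ae_abs_le h12 (hqm.mono_set hright)
        (ae_restrict_of_ae_restrict_of_subset hright hq))]
    ring
  calc _ ≤ _ := hsplit ▸ abs_sub _ _
    _ ≤ M / α * (t₂ - t₁) ^ α + M / α * (t₂ - t₁) ^ α :=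
        add_le_add
          (abs_integral_kernel_tail_le hα0 h12 (ae_restrict_of_ae_restrict_of_subset hright hq))
          (abs_integral_kernel_increment_le hα0 hα1 hM ha h12
            (ae_restrict_of_ae_restrict_of_subset hleft hq))
    _ = 2 * M / α * (t₂ - t₁) ^ α := by ring

lemma abs_rlInt_sub_le (hα0 : 0 < α) (hα1 : α ≤ 1) (hM : 0 ≤ M)
    (ha : a ≤ t₁) (h12 : t₁ ≤ t₂) (hqm : AEStronglyMeasurable q (volume.restrict (Ioc a t₂)))
    (hq : ∀ᵐ τ ∂volume.restrict (Ioc a t₂), |q τ| ≤ M) :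
    |rlInt a α q t₂ - rlInt a α q t₁| ≤ 2 * M / (α * Real.Gamma α) * (t₂ - t₁) ^ α := by
  have hΓ : 0 < Real.Gamma α := Real.Gamma_pos_of_pos hα0
  simp only [rlInt, if_neg hα0.ne']
  rw [← mul_sub, abs_mul, abs_of_pos (one_div_pos.mpr hΓ)]
  calc _ ≤ 1 / Real.Gamma α * (2 * M / α * (t₂ - t₁) ^ α) :=
        mul_le_mul_of_nonneg_left (abs_integral_kernel_sub_le hα0 hα1 hM ha h12 hqm hq)
          (one_div_pos.mpr hΓ).le
    _ = _ := by field_simp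

end Hoelder

theorem statement2_general (a : ℝ) (I : Set ℝ)
    (haI : a ∈ I) (hIsub : I ⊆ Set.Ici a)
    (hIord : I.OrdConnected)
    (α : ℝ) (hα0 : 0 < α) (hα1 : α ≤ 1) (q : ℝ → ℝ)
    (hqm : MeasureTheory.AEStronglyMeasurable q (MeasureTheory.volume.restrict I))
    (hqb : ∃ M : ℝ, ∀ᵐ t ∂(MeasureTheory.volume.restrict I), |q t| ≤ M) :
    (∃ C : ℝ, 0 ≤ C ∧ ∀ t₁ ∈ I, ∀ t₂ ∈ I,
      |rlInt a α q t₂ - rlInt a α q t₁| ≤ C * |t₂ - t₁| ^ α) ∧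
    rlInt a α q a = 0 := by
  obtain ⟨M₀, hM₀⟩ := hqb
  set M := max M₀ 0
  have hM : ∀ᵐ τ ∂volume.restrict I, |q τ| ≤ M := hM₀.mono fun τ h => h.trans (le_max_left _ _)
  have hΓ : 0 < Real.Gamma α := Real.Gamma_pos_of_pos hα0
  have hle : ∀ t₁ ∈ I, ∀ t₂ ∈ I, t₁ ≤ t₂ →
      |rlInt a α q t₂ - rlInt a α q t₁| ≤ 2 * M / (α * Real.Gamma α) * |t₂ - t₁| ^ α := by
    intro t₁ ht₁ t₂ ht₂ h12
    have hsub : Ioc a t₂ ⊆ I := Ioc_subset_Icc_self.trans (hIord.out haI ht₂)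
    rw [abs_of_nonneg (sub_nonneg.mpr h12)]
    exact abs_rlInt_sub_le hα0 hα1 (le_max_right _ _) (hIsub ht₁) h12 (hqm.mono_set hsub)
      (ae_restrict_of_ae_restrict_of_subset hsub hM)
  refine ⟨⟨2 * M / (α * Real.Gamma α), by positivity, fun t₁ ht₁ t₂ ht₂ => ?_⟩, ?_⟩
  · rcases le_total t₁ t₂ with h | h
    · exact hle t₁ ht₁ t₂ ht₂ h
    · rw [abs_sub_comm, abs_sub_comm t₂]
      exact hle t₂ ht₂ t₁ ht₁ h
  · simp [rlInt, hα0.ne']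

theorem statement2 (a : ℝ) (I : Set ℝ)
    (haI : a ∈ I) (hIsub : I ⊆ Set.Ici a) (hIint : (interior I).Nonempty)
    (hIord : I.OrdConnected)
    (α : ℝ) (hα0 : 0 < α) (hα1 : α ≤ 1) (q : ℝ → ℝ)
    (hqm : MeasureTheory.AEStronglyMeasurable q (MeasureTheory.volume.restrict I))
    (hqb : ∃ M : ℝ, ∀ᵐ t ∂(MeasureTheory.volume.restrict I), |q t| ≤ M) :
    (∃ C : ℝ, 0 ≤ C ∧ ∀ t₁ ∈ I, ∀ t₂ ∈ I,
      |rlInt a α q t₂ - rlInt a α q t₁| ≤ C * |t₂ - t₁| ^ α) ∧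
    rlInt a α q a = 0 :=
  statement2_general a I haI hIsub hIord α hα0 hα1 q hqm hqb
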